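/- For every c₀ ∈ ℂ, the function u(ρ) := c₀ ρ + (ρ/10) log(1−ρ²) + (1/(10ρ⁴)) log((1+ρ)/(1−ρ)) − (1/(5ρ⁴)) (ρ + ρ³/3 + ρ⁵/5) satisfies the ordinary differential equation u''(ρ) + (4/ρ) u'(ρ) − (4/ρ²) u(ρ) = −ρ/(1−ρ²) for all ρ ∈ (0,1). -/

import Mathlib

/-!
The linear term `c₀ρ` lies in the kernel of `u ↦ u'' + (4/ρ)u' − (4/ρ²)u`, so only the real
function `g = u12Real` needs work. With `M = log(1−ρ²)`, `L = log((1+ρ)/(1−ρ))` and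
`Q = ρ + ρ³/3 + ρ⁵/5`, one has `M' = −2ρ/(1−ρ²)` and `L' = 2/(1−ρ²)`, and since `1/(1−ρ²) − Q' = ρ⁶/(1−ρ²)` the
rational terms of the derivatives collapse:
`g' = M/10 + (4Q − 2L)/(5ρ⁵)` and `g'' = −ρ/(1−ρ²) + (2L − 4Q)/ρ⁶`.
The equation is then an algebraic identity in `L`, `M` and `Q`.
-/

noncomputable section

/-- `u(ρ) = c₀ρ + (ρ/10)log(1−ρ²) + (1/(10ρ⁴))log((1+ρ)/(1−ρ)) − (1/(5ρ⁴))(ρ + ρ³/3 + ρ⁵/5)` -/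
def u12 (c₀ : ℂ) (ρ : ℝ) : ℂ :=
  c₀ * (ρ : ℂ) +
    (((ρ / 10) * Real.log (1 - ρ ^ 2) +
        (1 / (10 * ρ ^ 4)) * Real.log ((1 + ρ) / (1 - ρ)) -
        (1 / (5 * ρ ^ 4)) * (ρ + ρ ^ 3 / 3 + ρ ^ 5 / 5) : ℝ) : ℂ)

open Real Filter Topology

def u12Real (ρ : ℝ) : ℝ :=
  ρ / 10 * log (1 - ρ ^ 2) + 1 / (10 * ρ ^ 4) * log ((1 + ρ) / (1 - ρ)) -
    1 / (5 * ρ ^ 4) * (ρ + ρ ^ 3 / 3 + ρ ^ 5 / 5)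

def u12RealDeriv (ρ : ℝ) : ℝ :=
  log (1 - ρ ^ 2) / 10 +
    (4 * (ρ + ρ ^ 3 / 3 + ρ ^ 5 / 5) - 2 * log ((1 + ρ) / (1 - ρ))) / (5 * ρ ^ 5)

def u12RealDeriv2 (ρ : ℝ) : ℝ :=
  -(ρ / (1 - ρ ^ 2)) + (2 * log ((1 + ρ) / (1 - ρ)) - 4 * (ρ + ρ ^ 3 / 3 + ρ ^ 5 / 5)) / ρ ^ 6

section Derivatives

variable {ρ : ℝ}

theorem hasDerivAt_artanh_taylor5 :
    HasDerivAt (fun x : ℝ => x + x ^ 3 / 3 + x ^ 5 / 5) (1 + ρ ^ 2 + ρ ^ 4) ρ := by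
  refine (((hasDerivAt_id' ρ).fun_add ((hasDerivAt_pow 3 ρ).div_const 3)).fun_add
    ((hasDerivAt_pow 5 ρ).div_const 5)).congr_deriv ?_
  norm_num

theorem hasDerivAt_log_one_sub_sq (hρ : 1 - ρ ^ 2 ≠ 0) :
    HasDerivAt (fun x => log (1 - x ^ 2)) (-(2 * ρ) / (1 - ρ ^ 2)) ρ := by
  simpa using ((hasDerivAt_pow 2 ρ).const_sub 1).log hρ

theorem hasDerivAt_log_one_add_div_one_sub (hρ : 1 - ρ ^ 2 ≠ 0) :
    HasDerivAt (fun x => log ((1 + x) / (1 - x))) (2 / (1 - ρ ^ 2)) ρ := by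
  have hsub : 1 - ρ ≠ 0 := fun h => hρ (by linear_combination (1 + ρ) * h)
  have hadd : 1 + ρ ≠ 0 := fun h => hρ (by linear_combination (1 - ρ) * h)
  have hquot := (((hasDerivAt_id' ρ).const_add 1).fun_div ((hasDerivAt_id' ρ).const_sub 1)
    hsub).log (div_ne_zero hadd hsub)
  convert hquot using 1
  field_simp
  ring

theorem hasDerivAt_u12Real (h₀ : ρ ≠ 0) (h₁ : 1 - ρ ^ 2 ≠ 0) :
    HasDerivAt u12Real (u12RealDeriv ρ) ρ := by
  have hM := hasDerivAt_log_one_sub_sq h₁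
  have hL := hasDerivAt_log_one_add_div_one_sub h₁
  refine (((((hasDerivAt_id' ρ).div_const 10).fun_mul hM).fun_add
    (((hasDerivAt_const ρ 1).fun_div ((hasDerivAt_pow 4 ρ).const_mul 10) (by positivity)).fun_mul
      hL)).fun_sub
    (((hasDerivAt_const ρ 1).fun_div ((hasDerivAt_pow 4 ρ).const_mul 5) (by positivity)).fun_mul
      hasDerivAt_artanh_taylor5)).congr_deriv ?_
  simp only [u12RealDeriv]
  norm_num
  field_simp
  ring

theorem hasDerivAt_u12RealDeriv (h₀ : ρ ≠ 0) (h₁ : 1 - ρ ^ 2 ≠ 0) :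
    HasDerivAt u12RealDeriv (u12RealDeriv2 ρ) ρ := by
  refine (((hasDerivAt_log_one_sub_sq h₁).div_const 10).fun_add
    (((hasDerivAt_artanh_taylor5.const_mul 4).fun_sub
      ((hasDerivAt_log_one_add_div_one_sub h₁).const_mul 2)).fun_div
      ((hasDerivAt_pow 5 ρ).const_mul 5) (by positivity))).congr_deriv ?_
  simp only [u12RealDeriv2]
  norm_num
  field_simp
  ring

theorem u12Real_ode (h₀ : ρ ≠ 0) (h₁ : 1 - ρ ^ 2 ≠ 0) :
    u12RealDeriv2 ρ + 4 / ρ * u12RealDeriv ρ - 4 / ρ ^ 2 * u12Real ρ = -(ρ / (1 - ρ ^ 2)) := by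
  simp only [u12Real, u12RealDeriv, u12RealDeriv2]
  field_simp
  ring

theorem hasDerivAt_u12 (c₀ : ℂ) (h₀ : ρ ≠ 0) (h₁ : 1 - ρ ^ 2 ≠ 0) :
    HasDerivAt (u12 c₀) (c₀ + u12RealDeriv ρ) ρ := by
  have hlin : HasDerivAt (fun x : ℝ => c₀ * x) c₀ ρ := by
    simpa using (Complex.ofRealCLM.hasDerivAt (x := ρ)).const_mul c₀
  exact hlin.fun_add (hasDerivAt_u12Real h₀ h₁).ofReal_comp

theorem deriv_deriv_u12 (c₀ : ℂ) (h₀ : ρ ≠ 0) (h₁ : 1 - ρ ^ 2 ≠ 0) :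
    deriv (deriv (u12 c₀)) ρ = u12RealDeriv2 ρ := by
  have hderiv : deriv (u12 c₀) =ᶠ[𝓝 ρ] fun x => c₀ + (u12RealDeriv x : ℂ) := by
    filter_upwards [eventually_ne_nhds h₀,
      ((continuous_const.sub (continuous_pow 2)).continuousAt.eventually_ne h₁ :
        ∀ᶠ x in 𝓝 ρ, 1 - x ^ 2 ≠ 0)] with x hx₀ hx₁
    exact (hasDerivAt_u12 c₀ hx₀ hx₁).deriv
  rw [hderiv.deriv_eq]
  exact ((hasDerivAt_u12RealDeriv h₀ h₁).ofReal_comp.const_add c₀).deriv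

end Derivatives

/-- the function `u12 c₀` solves `u'' + (4/ρ)u' − (4/ρ²)u = −ρ/(1−ρ²)` on `(0,1)`. -/
theorem stmt_12 (c₀ : ℂ) :
    ∀ ρ ∈ Set.Ioo (0 : ℝ) 1,
      deriv (deriv (u12 c₀)) ρ + (4 / (ρ : ℂ)) * deriv (u12 c₀) ρ -
          (4 / (ρ : ℂ) ^ 2) * u12 c₀ ρ =
        -((ρ : ℂ) / (1 - (ρ : ℂ) ^ 2)) := by
  rintro ρ ⟨hpos, hlt⟩
  have h₀ : ρ ≠ 0 := hpos.ne'
  have h₁ : 1 - ρ ^ 2 ≠ 0 := by nlinarith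
  have hode : ((u12RealDeriv2 ρ + 4 / ρ * u12RealDeriv ρ - 4 / ρ ^ 2 * u12Real ρ : ℝ) : ℂ) =
      ((-(ρ / (1 - ρ ^ 2)) : ℝ) : ℂ) := congrArg _ (u12Real_ode h₀ h₁)
  push_cast at hode
  rw [deriv_deriv_u12 c₀ h₀ h₁, (hasDerivAt_u12 c₀ h₀ h₁).deriv, ← hode]
  change _ - 4 / (ρ : ℂ) ^ 2 * (c₀ * ρ + (u12Real ρ : ℂ)) = _
  have hρ : (ρ : ℂ) ≠ 0 := Complex.ofReal_ne_zero.mpr h₀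
  field_simp
  ring

end
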